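/- Every Kurepa tree 𝐓 admits a transversal ⟨t_α | α < ω₁⟩ ∈ ∏_{α<ω₁} T_α such that for every cofinal branch f ∈ B(𝐓) the set G(f) := {α < ω₁ | f↾α = t_α} is uncountable. -/

import Mathlib

/-!
Cut `ω₁` into the blocks `[ω * β, ω * β + ω)`. Enumerate the countable level `ω * β + ω` as
`⟨z_n⟩` and let `t_{ω * β + n}` be the predecessor of `z_n` on level `ω * β + n`. A cofinal
branch passes through some `z_n`, hence through `t_{ω * β + n}`, so `G(f)` meets every block:
it is unbounded in `ω₁`, and countable subsets of `ω₁` are bounded.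
-/

noncomputable section

open Cardinal Set

/-- The first uncountable ordinal `ω₁`. -/
def omega1 : Ordinal := (Cardinal.aleph 1).ord

/-- A transfinite binary sequence: a function `t : α → 2` for some ordinal `α`. -/
abbrev BinSeq : Type 1 := Σ α : Ordinal, (Set.Iio α → Bool)

namespace BinSeq

/-- The restriction `t ↾ β` of a binary sequence `t` to an initial segment of its domain. -/
def restrict (t : BinSeq) (β : Ordinal) (h : β ≤ t.1) : BinSeq :=
  ⟨β, fun x => t.2 ⟨x.1, lt_of_lt_of_le x.2 h⟩⟩

/-- `s.sub t`: `s` is an initial segment of `t` (that is, `s ⊆ t`). -/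
def sub (s t : BinSeq) : Prop := ∃ h : s.1 ≤ t.1, t.restrict s.1 h = s

/-- `s.ssub t`: `s` is a proper initial segment of `t` (that is, `s ⊊ t`). -/
def ssub (s t : BinSeq) : Prop := ∃ h : s.1 < t.1, t.restrict s.1 h.le = s

end BinSeq

/-- A candidate branch: a function `f : ω₁ → 2`. -/
abbrev BinBranch : Type 1 := Set.Iio omega1 → Bool

/-- The restriction `f ↾ α` of `f : ω₁ → 2` to an ordinal `α < ω₁`. -/
def BinBranch.restrict (f : BinBranch) (α : Ordinal) (h : α < omega1) : BinSeq :=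
  ⟨α, fun x => f ⟨x.1, lt_trans x.2 h⟩⟩

/-- `C` is a closed unbounded (club) subset of `ω₁`: it is a set of countable ordinals,
unbounded in `ω₁`, and closed under suprema of bounded nonempty subsets. -/
def IsClubBelow (C : Set Ordinal) : Prop :=
  C ⊆ Set.Iio omega1 ∧
  (∀ β < omega1, ∃ α ∈ C, β < α) ∧
  (∀ s : Set Ordinal, s ⊆ C → s.Nonempty → sSup s < omega1 → sSup s ∈ C)

/-- `S` is a stationary subset of `ω₁`: it meets every club subset of `ω₁`. -/
def IsStationaryBelow (S : Set Ordinal) : Prop :=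
  ∀ C : Set Ordinal, IsClubBelow C → (S ∩ C).Nonempty

/-- `T` is a binary ℵ₁-tree: a downward closed family of binary sequences of
countable length, all of whose levels are countable. -/
structure IsBinaryAleph1Tree (T : Set BinSeq) : Prop where
  dom_lt : ∀ t ∈ T, t.1 < omega1
  downward_closed : ∀ t ∈ T, ∀ β, ∀ h : β ≤ t.1, t.restrict β h ∈ T
  countable_levels : ∀ α < omega1, {t | t ∈ T ∧ t.1 = α}.Countable

/-- The set of cofinal branches of a binary tree:
functions `f : ω₁ → 2` all of whose initial segments lie in `T`. -/
def BinBranches (T : Set BinSeq) : Set BinBranch :=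
  {f | ∀ α, ∀ h : α < omega1, f.restrict α h ∈ T}

/-- A binary Kurepa tree: a binary ℵ₁-tree with at least ℵ₂-many cofinal branches. -/
def IsBinaryKurepa (T : Set BinSeq) : Prop :=
  IsBinaryAleph1Tree T ∧ Cardinal.aleph 2 ≤ #(↥(BinBranches T))

/-- `◇(T)` for a binary tree `T`: there is a transversal `⟨t_α | α < ω₁⟩` with `t_α ∈ T_α`
such that for every cofinal branch `f` of `T`, the set `{α < ω₁ | f ↾ α = t_α}` is stationary. -/
def BinDiamond (T : Set BinSeq) : Prop :=
  ∃ t : Ordinal → BinSeq,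
    (∀ α < omega1, t α ∈ T ∧ (t α).1 = α) ∧
    ∀ f ∈ BinBranches T,
      IsStationaryBelow {α | ∃ h : α < omega1, BinBranch.restrict f α h = t α}

/-- An abstract tree: a strict partial order in which the set of predecessors
of every point is well-ordered. -/
structure OTree where
  carrier : Type
  lt : carrier → carrier → Prop
  lt_trans : ∀ {x y z}, lt x y → lt y z → lt x z
  lt_irrefl : ∀ x, ¬ lt x x
  pred_wellOrder : ∀ x, IsWellOrder {y // lt y x} fun a b => lt a.1 b.1

namespace OTree

/-- The height of a node: the order type of its set of predecessors. -/
def height (t : OTree) (x : t.carrier) : Ordinal :=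
  @Ordinal.type {y // t.lt y x} (fun a b => t.lt a.1 b.1) (t.pred_wellOrder x)

/-- The `α`-th level of the tree. -/
def level (t : OTree) (α : Ordinal) : Set t.carrier := {x | t.height x = α}

/-- An ℵ₁-tree: a tree of height `ω₁` all of whose levels are countable. -/
def IsAleph1Tree (t : OTree) : Prop :=
  (∀ x, t.height x < omega1) ∧
  (∀ α < omega1, (t.level α).Nonempty) ∧
  (∀ α < omega1, (t.level α).Countable)

/-- A tree is Hausdorff if nodes of the same limit height
with the same predecessors are equal. -/
def Hausdorff (t : OTree) : Prop :=
  ∀ x y : t.carrier, Order.IsSuccLimit (t.height x) → t.height x = t.height y →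
    {z | t.lt z x} = {z | t.lt z y} → x = y

/-- The set of cofinal branches: uncountable maximal chains. -/
def branches (t : OTree) : Set (Set t.carrier) :=
  {C | IsMaxChain t.lt C ∧ ¬ C.Countable}

/-- A Kurepa tree: an ℵ₁-tree with at least ℵ₂-many cofinal branches. -/
def IsKurepa (t : OTree) : Prop :=
  t.IsAleph1Tree ∧ Cardinal.aleph 2 ≤ #(↥t.branches)

/-- `◇(𝐓)`: there is a transversal `⟨b_α | α < ω₁⟩` with `b_α ∈ T_α` such that for every
cofinal branch `f`, the set `{α < ω₁ | f ↾ α = b_α}` (i.e. the set of `α < ω₁` such that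
`b_α` is the unique element of `f` on the `α`-th level) is stationary. -/
def Diamond (t : OTree) : Prop :=
  ∃ b : Ordinal → t.carrier,
    (∀ α < omega1, b α ∈ t.level α) ∧
    ∀ f ∈ t.branches,
      IsStationaryBelow {α | α < omega1 ∧ f ∩ t.level α = {b α}}

/-- A tree has height `ω₁` if every node has countable height
and every countable level is nonempty. -/
def HasHeightOmega1 (t : OTree) : Prop :=
  (∀ x, t.height x < omega1) ∧ ∀ α < omega1, (t.level α).Nonempty

end OTree

open Ordinal

theorem omega1_eq_omega_one : omega1 = ω₁ :=
  Cardinal.ord_aleph 1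

theorem countable_Iio_of_lt_omega1 {β : Ordinal.{0}} (hβ : β < omega1) : (Iio β).Countable := by
  rw [omega1_eq_omega_one, lt_omega_iff_card_lt, Cardinal.lt_aleph_one_iff] at hβ
  rw [← Cardinal.le_aleph0_iff_set_countable, Cardinal.mk_Iio_ordinal, Cardinal.lift_le_aleph0]
  exact hβ

theorem omega0_mul_add_omega0_lt_omega1 {β : Ordinal} (hβ : β < omega1) : ω * β + ω < omega1 := by
  rw [omega1_eq_omega_one] at hβ ⊢
  exact isPrincipal_add_omega 1 (isPrincipal_mul_omega 1 omega0_lt_omega_one hβ) omega0_lt_omega_one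

theorem omega0_mul_add_natCast_lt_omega1 {β : Ordinal} (hβ : β < omega1) (n : ℕ) :
    ω * β + n < omega1 :=
  ((add_lt_add_iff_left _).2 (natCast_lt_omega0 n)).trans (omega0_mul_add_omega0_lt_omega1 hβ)

theorem not_countable_of_forall_exists_le {S : Set Ordinal.{0}} (hS : S ⊆ Iio omega1)
    (h : ∀ β < omega1, ∃ α ∈ S, β ≤ α) : ¬ S.Countable := by
  rw [omega1_eq_omega_one] at hS h
  intro hc
  have : Countable S := hc.to_subtype
  have hsup : ⨆ s : S, (s : Ordinal) < ω₁ := iSup_lt_omega_one fun s => hS s.2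
  obtain ⟨α, hα, hle⟩ :=
    h _ (isPrincipal_add_omega 1 hsup (one_lt_omega0.trans omega0_lt_omega_one))
  have hbdd : BddAbove (range fun s : S => (s : Ordinal)) := by
    rw [Subtype.range_coe]
    exact bddAbove_of_small
  exact (lt_add_one _).not_ge (hle.trans (le_ciSup hbdd ⟨α, hα⟩))

namespace OTree

variable {t : OTree}

theorem height_eq_typein {x y : t.carrier} (h : t.lt y x) :
    t.height y =
      @typein {z // t.lt z x} (fun a b => t.lt a.1 b.1) (t.pred_wellOrder x) ⟨y, h⟩ := by
  let _ := t.pred_wellOrder x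
  let _ := t.pred_wellOrder y
  rw [← type_subrel]
  exact type_eq.2 ⟨RelIso.mk (Equiv.mk (fun z => ⟨⟨z.1, t.lt_trans z.2 h⟩, z.2⟩)
    (fun w => ⟨w.1.1, w.2⟩) (fun _ => rfl) (fun _ => rfl)) Iff.rfl⟩

theorem height_lt_height {x y : t.carrier} (h : t.lt y x) : t.height y < t.height x := by
  let _ := t.pred_wellOrder x
  rw [height_eq_typein h]
  exact typein_lt_type _ _

theorem exists_lt_height_eq {x : t.carrier} {β : Ordinal} (hβ : β < t.height x) :
    ∃ y, t.lt y x ∧ t.height y = β := by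
  let _ := t.pred_wellOrder x
  obtain ⟨y, hy⟩ := typein_surj (fun a b : {z // t.lt z x} => t.lt a.1 b.1) hβ
  exact ⟨y.1, y.2, (height_eq_typein y.2).trans hy⟩

/-- Predecessors of `x` are pairwise comparable, so a maximal chain is downward closed. -/
theorem mem_of_isMaxChain_of_lt {f : Set t.carrier} (hf : IsMaxChain t.lt f) {x y : t.carrier}
    (hx : x ∈ f) (hyx : t.lt y x) : y ∈ f := by
  let _ := t.pred_wellOrder x
  have hchain : IsChain t.lt (insert y f) := by
    refine hf.1.insert fun z hz hne => ?_
    rcases eq_or_ne z x with rfl | hzx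
    · exact Or.inl hyx
    rcases hf.1 hz hx hzx with hzx' | hxz
    · rcases trichotomous_of (fun a b : {w // t.lt w x} => t.lt a.1 b.1) ⟨y, hyx⟩ ⟨z, hzx'⟩
        with h | h | h
      · exact Or.inl h
      · exact absurd (congrArg Subtype.val h) hne
      · exact Or.inr h
    · exact Or.inl (t.lt_trans hyx hxz)
  exact hf.2 hchain (subset_insert y f) ▸ mem_insert y f

theorem inter_level_eq_singleton_of_isChain {f : Set t.carrier} (hf : IsChain t.lt f)
    {y : t.carrier} {α : Ordinal} (hy : y ∈ f) (hyα : y ∈ t.level α) :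
    f ∩ t.level α = {y} := by
  refine eq_singleton_iff_unique_mem.2 ⟨⟨hy, hyα⟩, fun z ⟨hz, hzα⟩ => ?_⟩
  by_contra hne
  have hheight : t.height z = t.height y := hzα.trans hyα.symm
  rcases hf hz hy hne with h | h
  · exact (height_lt_height h).ne hheight
  · exact (height_lt_height h).ne' hheight

theorem countable_setOf_height_le (hcnt : ∀ α < omega1, (t.level α).Countable) {β : Ordinal}
    (hβ : β < omega1) : {x | t.height x ≤ β}.Countable := by
  have : {x | t.height x ≤ β} = ⋃ γ ∈ Iic β, t.level γ := by
    ext x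
    simp [level]
  have hIic : (Iic β).Countable := Iio_insert (a := β) ▸ (countable_Iio_of_lt_omega1 hβ).insert β
  rw [this]
  exact hIic.biUnion fun γ hγ => hcnt γ (hγ.trans_lt hβ)

theorem inter_level_nonempty_of_mem_branches (hcnt : ∀ α < omega1, (t.level α).Countable)
    {f : Set t.carrier} (hf : f ∈ t.branches) {β : Ordinal} (hβ : β < omega1) :
    (f ∩ t.level β).Nonempty := by
  obtain ⟨x, hx, hβx⟩ : ∃ x ∈ f, β < t.height x := by
    by_contra! h
    exact hf.2 ((countable_setOf_height_le hcnt hβ).mono h)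
  obtain ⟨y, hyx, hy⟩ := exists_lt_height_eq hβx
  exact ⟨y, mem_of_isMaxChain_of_lt hf.1 hx hyx, hy⟩

theorem exists_level_eq_range (hne : ∀ α < omega1, (t.level α).Nonempty)
    (hcnt : ∀ α < omega1, (t.level α).Countable) :
    ∃ e : Ordinal → ℕ → t.carrier, ∀ γ < omega1, t.level γ = range (e γ) := by
  obtain ⟨x₀, -⟩ := hne 0 (omega1_eq_omega_one ▸ omega_pos 1)
  have : ∀ γ, ∃ e : ℕ → t.carrier, γ < omega1 → t.level γ = range e := by
    intro γ
    by_cases hγ : γ < omega1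
    · obtain ⟨e, he⟩ := (hcnt γ hγ).exists_eq_range (hne γ hγ)
      exact ⟨e, fun _ => he⟩
    · exact ⟨fun _ => x₀, fun h => absurd h hγ⟩
  choose e he using this
  exact ⟨e, he⟩

theorem exists_transversal_below_level_omega0_mul_add_omega0
    (hne : ∀ α < omega1, (t.level α).Nonempty) (hcnt : ∀ α < omega1, (t.level α).Countable) :
    ∃ b : Ordinal → t.carrier, (∀ α < omega1, b α ∈ t.level α) ∧
      ∀ β < omega1, ∀ z ∈ t.level (ω * β + ω), ∃ n : ℕ, t.lt (b (ω * β + n)) z := by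
  obtain ⟨e, he⟩ := exists_level_eq_range hne hcnt
  choose k hk using fun α : Ordinal => lt_omega0.1 (mod_lt α omega0_ne_zero)
  let z α := e (ω * (α / ω) + ω) (k α)
  have hpred : ∀ α, ∃ y, α < omega1 → t.lt y (z α) ∧ t.height y = α := by
    intro α
    by_cases hα : α < omega1
    · have hdiv_lt : α / ω < omega1 := (div_le_of_le_mul (le_mul_right α omega0_pos)).trans_lt hα
      have hz : z α ∈ t.level (ω * (α / ω) + ω) := by
        rw [he _ (omega0_mul_add_omega0_lt_omega1 hdiv_lt)]
        exact mem_range_self _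
      have hlt : α < t.height (z α) := by
        rw [show t.height _ = _ from hz]
        conv_lhs => rw [← div_add_mod α ω]
        exact (add_lt_add_iff_left _).2 (mod_lt α omega0_ne_zero)
      obtain ⟨y, hy⟩ := exists_lt_height_eq hlt
      exact ⟨y, fun _ => hy⟩
    · exact ⟨z α, fun h => absurd h hα⟩
  choose b hb using hpred
  refine ⟨b, fun α hα => (hb α hα).2, fun β hβ x hx => ?_⟩
  rw [he _ (omega0_mul_add_omega0_lt_omega1 hβ)] at hx
  obtain ⟨n, rfl⟩ := hx
  have hdiv : (ω * β + n) / ω = β := by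
    rw [mul_add_div _ omega0_ne_zero, div_eq_zero_of_lt (natCast_lt_omega0 n), add_zero]
  have hmod : k (ω * β + n) = n := by
    have := hk (ω * β + n)
    rwa [mul_add_mod_self, mod_eq_of_lt (natCast_lt_omega0 n), Nat.cast_inj, eq_comm] at this
  refine ⟨n, ?_⟩
  simpa only [z, hdiv, hmod] using (hb _ (omega0_mul_add_natCast_lt_omega1 hβ n)).1

end OTree

/-- Every Kurepa tree `𝐓` admits a transversal `⟨t_α | α < ω₁⟩` such that for
every cofinal branch `f` the set `G(f) = {α < ω₁ | f ↾ α = t_α}` is uncountable. -/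
theorem statement7 (t : OTree) (h1 : t.IsKurepa) :
    ∃ b : Ordinal → t.carrier,
      (∀ α < omega1, b α ∈ t.level α) ∧
      ∀ f ∈ t.branches,
        ¬ ({α : Ordinal | α < omega1 ∧ f ∩ t.level α = {b α}}).Countable := by
  obtain ⟨⟨-, hne, hcnt⟩, -⟩ := h1
  obtain ⟨b, hb, hb_below⟩ := t.exists_transversal_below_level_omega0_mul_add_omega0 hne hcnt
  refine ⟨b, hb, fun f hf => not_countable_of_forall_exists_le (fun α hα => hα.1) ?_⟩
  intro β hβ
  obtain ⟨z, hzf, hz⟩ :=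
    OTree.inter_level_nonempty_of_mem_branches hcnt hf (omega0_mul_add_omega0_lt_omega1 hβ)
  obtain ⟨n, hbz⟩ := hb_below β hβ z hz
  have hα := omega0_mul_add_natCast_lt_omega1 hβ n
  have hbf : b (ω * β + n) ∈ f := OTree.mem_of_isMaxChain_of_lt hf.1 hzf hbz
  refine ⟨ω * β + n, ⟨hα, OTree.inter_level_eq_singleton_of_isChain hf.1.1 hbf (hb _ hα)⟩, ?_⟩
  exact (le_mul_right β omega0_pos).trans le_self_add
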